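/- arXiv:2006.04152 — 2 statements merged into one kernel-verified Lean document; each statement's English description precedes it below -/
import Mathlib

section
/- Let (Ω, P) be a probability space, let A and W be events with W ⊆ A (A is the event that PABEE stops early, W the event that it stops early with a wrong prediction), and let F be an event with P(F) = p that is independent of both A and W (the final classifier misclassifies). Then the PABEE error event W ∪ (Aᶜ ∩ F) has probability P(W) + p·(1 − P(A)), and this probability is strictly less than p if and only if P(W) < p · P(A). -/
open MeasureTheory

/-- **PABEE error-event reduction.**  Let `P` be a probability measure, `A` the
event that PABEE stops early, `W ⊆ A` the event that it stops early with a
wrong prediction, and `F` the event (of probability `p`) that the final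
classifier misclassifies, with `F` independent of both `A` and `W`.  Then the
PABEE error event `W ∪ (Aᶜ ∩ F)` has probability `P W + p * (1 - P A)`, and
this is `< p` iff `P W < p * P A`. -/
theorem pabee_error_event_reduction
    {Ω : Type*} [MeasurableSpace Ω] (P : Measure Ω) [IsProbabilityMeasure P]
    (A W F : Set Ω) (hA : MeasurableSet A) (hW : MeasurableSet W)
    (hF : MeasurableSet F) (hWA : W ⊆ A) (p : ENNReal) (hFp : P F = p)
    (hFA : P (F ∩ A) = P F * P A) (hFW : P (F ∩ W) = P F * P W) :
    P (W ∪ (Aᶜ ∩ F)) = P W + p * (1 - P A) ∧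
      (P (W ∪ (Aᶜ ∩ F)) < p ↔ P W < p * P A) := by
  have hp1 : p ≤ 1 := hFp ▸ prob_le_one
  have hpt : p ≠ ⊤ := ne_top_of_le_ne_top ENNReal.one_ne_top hp1
  have hA1 : P A ≤ 1 := prob_le_one
  have hAt : P A ≠ ⊤ := measure_ne_top P A
  have hkey : p * P A + p * (1 - P A) = p := by
    rw [← mul_add, add_tsub_cancel_of_le hA1, mul_one]
  -- compute P (Aᶜ ∩ F)
  have hsplit : P (F ∩ A) + P (F \ A) = P F := measure_inter_add_diff F hA
  have hdiff : P (Aᶜ ∩ F) = p * (1 - P A) := by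
    have h1 : Aᶜ ∩ F = F \ A := by ext x; simp [Set.mem_diff, and_comm]
    have h2 : p * P A + P (F \ A) = p := by
      rw [← hFp, ← hFA] at *
      exact hsplit
    rw [h1]
    have := hkey.trans h2.symm
    exact (ENNReal.add_right_inj (ENNReal.mul_ne_top hpt hAt)).mp this.symm
  have hdisj : Disjoint W (Aᶜ ∩ F) := by
    refine Set.disjoint_left.mpr fun x hx hx2 => hx2.1 (hWA hx)
  have hunion : P (W ∪ (Aᶜ ∩ F)) = P W + p * (1 - P A) := by
    rw [measure_union hdisj (hA.compl.inter hF), hdiff]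
  refine ⟨hunion, ?_⟩
  rw [hunion]
  nth_rewrite 2 [← hkey]
  exact ENNReal.add_lt_add_iff_right
    (ENNReal.mul_ne_top hpt (ne_top_of_le_ne_top ENNReal.one_ne_top tsub_le_self))
end

section
/- Let t ≥ 1 and m be natural numbers with t + 1 ≤ m, let q be a real number with 0 ≤ q ≤ 1, and let X_1, …, X_m be i.i.d. Bernoulli(q) random variables on the product probability space on {0,1}^m (value 1 with probability q). Then the probability of the event that there exists an index j with 1 ≤ j ≤ m − t such that X_j = X_{j+1} = … = X_{j+t} = 1 (some t+1 consecutive values are all equal to 1) is at most q^{t+1} + (m − t − 1)·(1−q)·q^{t+1}. -/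
open scoped Classical

/-- Extend a finite `{0,1}`-valued sequence (indexed `0, …, m-1`) to all of `ℕ`
(values beyond the range are irrelevant for the statements below). -/
def extend01 {m : ℕ} (ω : Fin m → Bool) : ℕ → Bool :=
  fun i => if h : i < m then ω ⟨i, h⟩ else false

namespace ProbConsecAux

noncomputable def wt (q : ℝ) : Bool → ℝ := fun b => if b then q else 1 - q

lemma wt_nonneg {q : ℝ} (hq0 : 0 ≤ q) (hq1 : q ≤ 1) (b : Bool) : 0 ≤ wt q b := by
  cases b <;> simp [wt] <;> linarith

lemma w_nonneg {q : ℝ} (hq0 : 0 ≤ q) (hq1 : q ≤ 1) {m : ℕ} (ω : Fin m → Bool) :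
    0 ≤ ∏ i, wt q (ω i) :=
  Finset.prod_nonneg fun _ _ => wt_nonneg hq0 hq1 _

lemma sum_prod_swap {m : ℕ} (g : Fin m → Bool → ℝ) :
    ∑ ω : Fin m → Bool, ∏ i, g i (ω i) = ∏ i, (g i true + g i false) := by
  have h : ∀ i : Fin m, g i true + g i false = ∑ b : Bool, g i b := fun i =>
    (Fintype.sum_bool (g i)).symm
  simp_rw [h]
  rw [Finset.prod_univ_sum (fun _ => Finset.univ) g, Fintype.piFinset_univ]

/-- Probability of a fixed pattern on a subset of coordinates. -/
lemma pat_sum {m : ℕ} {q : ℝ} (S : Finset ℕ) (hS : ∀ i ∈ S, i < m) (p : ℕ → Bool) :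
    ∑ ω : Fin m → Bool,
      (if (∀ i ∈ S, extend01 ω i = p i) then ∏ i, wt q (ω i) else 0)
      = ∏ i ∈ S, wt q (p i) := by
  set g : Fin m → Bool → ℝ :=
    fun i b => if (i : ℕ) ∈ S then (if b = p i then wt q b else 0) else wt q b with hg
  have h1 : ∀ ω : Fin m → Bool,
      (if (∀ i ∈ S, extend01 ω i = p i) then ∏ i, wt q (ω i) else 0)
        = ∏ i, g i (ω i) := by
    intro ω
    by_cases h : ∀ i ∈ S, extend01 ω i = p i
    · rw [if_pos h]
      refine Finset.prod_congr rfl fun i _ => ?_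
      by_cases hi : (i : ℕ) ∈ S
      · have hv := h i hi
        rw [extend01] at hv
        rw [dif_pos i.isLt] at hv
        simp only [hg, if_pos hi, Fin.eta] at *
        rw [if_pos hv]
      · simp [hg, hi]
    · rw [if_neg h]
      push_neg at h
      obtain ⟨i, hiS, hne⟩ := h
      have him : i < m := hS i hiS
      refine (Finset.prod_eq_zero (Finset.mem_univ (⟨i, him⟩ : Fin m)) ?_).symm
      have hv : ω ⟨i, him⟩ ≠ p i := by
        rw [extend01] at hne; rw [dif_pos him] at hne; exact hne
      simp [hg, hiS, hv]
  simp_rw [h1, sum_prod_swap]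
  have h2 : ∀ i : Fin m, g i true + g i false
      = (fun n => if n ∈ S then wt q (p n) else 1) (i : ℕ) := by
    intro i
    by_cases hi : (i : ℕ) ∈ S
    · simp only [hg, if_pos hi]
      cases hp : p (i : ℕ) <;> simp [wt, hp]
    · simp only [hg, if_neg hi]
      simp [wt]
  simp_rw [h2]
  rw [Fin.prod_univ_eq_prod_range (fun n => if n ∈ S then wt q (p n) else 1) m]
  have hsub : S ⊆ Finset.range m := fun i hi => Finset.mem_range.mpr (hS i hi)
  rw [← Finset.prod_subset hsub (fun x _ hx => if_neg hx)]
  exact Finset.prod_congr rfl fun i hi => if_pos hi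

/-- Covering sets. -/
def covS (t : ℕ) : ℕ → Finset ℕ
  | 0 => Finset.range (t + 1)
  | k + 1 => insert k (Finset.Icc (k + 1) (k + 1 + t))

/-- Covering patterns. -/
def covP : ℕ → ℕ → Bool
  | 0, _ => true
  | k + 1, i => decide (i ≠ k)

end ProbConsecAux

open ProbConsecAux in
/-- **Upper bound on the early-stopped misclassification probability.**  For
`X_1, …, X_m` i.i.d. `Bernoulli q` on the product probability space on
`{0,1}^m` (here 0-indexed as `ω 0, …, ω (m-1)`, with `true` of probability
`q`), the probability that some `t + 1` consecutive values are all equal to `1`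
is at most `q ^ (t+1) + (m - t - 1) * (1 - q) * q ^ (t+1)`. -/
theorem prob_consecutive_ones_le
    (t m : ℕ) (ht : 1 ≤ t) (htm : t + 1 ≤ m) (q : ℝ)
    (hq0 : 0 ≤ q) (hq1 : q ≤ 1) :
    (∑ ω : Fin m → Bool,
      if (∃ j, j + t < m ∧ ∀ i, i ≤ t → extend01 ω (j + i) = true) then
        ∏ i : Fin m, (if ω i then q else 1 - q)
      else 0) ≤
      q ^ (t + 1) + ((m : ℝ) - t - 1) * (1 - q) * q ^ (t + 1) := by
  have hwt : ∀ (ω : Fin m → Bool), (∏ i : Fin m, (if ω i then q else 1 - q))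
      = ∏ i, wt q (ω i) := fun ω => rfl
  set G : ℕ → (Fin m → Bool) → Prop :=
    fun j ω => ∀ i ∈ covS t j, extend01 ω i = covP j i with hG
  -- Step 1: the event implies the cover
  have hcover : ∀ ω : Fin m → Bool,
      (∃ j, j + t < m ∧ ∀ i, i ≤ t → extend01 ω (j + i) = true) →
      ∃ j ∈ Finset.range (m - t), G j ω := by
    intro ω hE
    classical
    have hj0m := (Nat.find_spec hE).1
    have hj0w := (Nat.find_spec hE).2
    refine ⟨Nat.find hE, Finset.mem_range.mpr (Nat.lt_sub_iff_add_lt.mpr hj0m), ?_⟩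
    cases hfind : Nat.find hE with
    | zero =>
      rw [hfind] at hj0w
      intro i hi
      simp only [covS, Finset.mem_range] at hi
      have := hj0w i (Nat.lt_succ_iff.mp hi)
      simpa [covP] using this
    | succ k =>
      rw [hfind] at hj0w hj0m
      have hmin : ¬(k + t < m ∧ ∀ i, i ≤ t → extend01 ω (k + i) = true) :=
        Nat.find_min hE (show k < Nat.find hE by omega)
      have hktm : k + t < m := by omega
      have hk0 : extend01 ω k = false := by
        push_neg at hmin
        obtain ⟨i, hit, hne⟩ := hmin hktm
        match i with
        | 0 => simpa using (Bool.not_eq_true _).mp hne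
        | i' + 1 =>
          exfalso
          have hw : extend01 ω ((k + 1) + i') = true := hj0w i' (by omega)
          rw [show (k + 1) + i' = k + (i' + 1) by omega] at hw
          exact hne hw
      intro i hi
      simp only [covS] at hi
      rcases Finset.mem_insert.mp hi with h | h
      · subst h; simpa [covP] using hk0
      · rw [Finset.mem_Icc] at h
        have hik : i ≠ k := by omega
        have hw : extend01 ω ((k + 1) + (i - (k + 1))) = true := hj0w _ (by omega)
        rw [show (k + 1) + (i - (k + 1)) = i by omega] at hw
        simpa [covP, hik] using hw
  -- Step 2: monotone + union bound
  have hstep : (∑ ω : Fin m → Bool,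
      if (∃ j, j + t < m ∧ ∀ i, i ≤ t → extend01 ω (j + i) = true) then
        ∏ i : Fin m, (if ω i then q else 1 - q)
      else 0) ≤
      ∑ j ∈ Finset.range (m - t), ∑ ω : Fin m → Bool,
        (if G j ω then ∏ i, wt q (ω i) else 0) := by
    rw [Finset.sum_comm]
    refine Finset.sum_le_sum fun ω _ => ?_
    have hnn : ∀ j, 0 ≤ (if G j ω then ∏ i, wt q (ω i) else 0) := by
      intro j
      split
      · exact w_nonneg hq0 hq1 ω
      · exact le_refl 0
    by_cases hE : ∃ j, j + t < m ∧ ∀ i, i ≤ t → extend01 ω (j + i) = true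
    · rw [if_pos hE, hwt]
      obtain ⟨j, hjm, hjG⟩ := hcover ω hE
      calc ∏ i, wt q (ω i) = (if G j ω then ∏ i, wt q (ω i) else 0) := by
            rw [if_pos hjG]
        _ ≤ ∑ j ∈ Finset.range (m - t), (if G j ω then ∏ i, wt q (ω i) else 0) :=
            Finset.single_le_sum (f := fun j => if G j ω then ∏ i, wt q (ω i) else 0)
              (fun j _ => hnn j) hjm
    · rw [if_neg hE]
      exact Finset.sum_nonneg fun j _ => hnn j
  refine hstep.trans ?_
  -- Step 3: compute each pattern probability
  have hval : ∀ j ∈ Finset.range (m - t),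
      (∑ ω : Fin m → Bool, (if G j ω then ∏ i, wt q (ω i) else 0))
      = if j = 0 then q ^ (t + 1) else (1 - q) * q ^ (t + 1) := by
    intro j hj
    rw [Finset.mem_range, Nat.lt_sub_iff_add_lt] at hj
    have hSm : ∀ i ∈ covS t j, i < m := by
      intro i hi
      match j with
      | 0 => simp only [covS, Finset.mem_range] at hi; omega
      | k + 1 =>
        simp only [covS] at hi
        rcases Finset.mem_insert.mp hi with h | h
        · omega
        · rw [Finset.mem_Icc] at h; omega
    have hps := pat_sum (q := q) (m := m) (covS t j) hSm (covP j)
    rw [show (∑ ω : Fin m → Bool, if G j ω then ∏ i, wt q (ω i) else 0)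
        = ∑ ω : Fin m → Bool,
            (if (∀ i ∈ covS t j, extend01 ω i = covP j i) then ∏ i, wt q (ω i) else 0)
      from rfl, hps]
    match j with
    | 0 =>
      simp only [covS, covP, if_pos rfl]
      rw [Finset.prod_const, Finset.card_range]
      simp [wt]
    | k + 1 =>
      rw [if_neg (by omega)]
      show ∏ i ∈ insert k (Finset.Icc (k + 1) (k + 1 + t)), wt q (covP (k + 1) i) = _
      rw [Finset.prod_insert (by rw [Finset.mem_Icc]; omega)]
      have h1 : wt q (covP (k + 1) k) = 1 - q := by simp [covP, wt]
      have h2 : ∀ i ∈ Finset.Icc (k + 1) (k + 1 + t), wt q (covP (k + 1) i) = q := by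
        intro i hi
        rw [Finset.mem_Icc] at hi
        have : i ≠ k := by omega
        simp [covP, wt, this]
      rw [h1, Finset.prod_congr rfl h2, Finset.prod_const, Nat.card_Icc]
      congr 2
      omega
  rw [Finset.sum_congr rfl hval]
  have hmt : m - t = (m - t - 1) + 1 := by omega
  rw [hmt, Finset.sum_range_succ']
  have hrw : ∀ k ∈ Finset.range (m - t - 1),
      (if k + 1 = 0 then q ^ (t + 1) else (1 - q) * q ^ (t + 1))
        = (1 - q) * q ^ (t + 1) := fun k _ => if_neg (by omega)
  rw [Finset.sum_congr rfl hrw, if_pos rfl, Finset.sum_const, Finset.card_range, nsmul_eq_mul]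
  have hcast : ((m - t - 1 : ℕ) : ℝ) = (m : ℝ) - t - 1 := by
    rw [Nat.sub_sub, Nat.cast_sub (by omega)]
    push_cast
    ring
  rw [hcast]
  apply le_of_eq
  ring
end
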